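/- For every positive integer n and every complex number z, ∑_{k=1}^{n} (-1)^k · 2^{2k+1} · k · C(4n,4k) · E_{4k-1}(z) = ∑_{k=1}^{n} (-1)^k · 2^{2k-1} · C(4n,4k-1) · B_{4k-1}(z) − ∑_{k=1}^{n} (-1)^k · 2^{2k-2} · C(4n,4k-3) · B_{4k-3}(z), where C(n,k) denotes the binomial coefficient. -/

import Mathlib

open Finset

/-- The Bernoulli polynomial `B_n` evaluated at a complex number `z`,
with generating function `t·e^{zt}/(e^t−1) = ∑_{n≥0} B_n(z)·t^n/n!`. -/
noncomputable def bernoulliPoly (n : ℕ) (z : ℂ) : ℂ :=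
  Polynomial.aeval z (Polynomial.bernoulli n)

/-- The Euler polynomial `E_n` evaluated at a complex number `z`,
with generating function `2·e^{zt}/(e^t+1) = ∑_{n≥0} E_n(z)·t^n/n!`,
given by the explicit formula `E_n(z) = ∑_{k=0}^n 2^{-k} ∑_{j=0}^k (-1)^j C(k,j)(z+j)^n`. -/
noncomputable def eulerPoly (n : ℕ) (z : ℂ) : ℂ :=
  ∑ k ∈ range (n + 1), (1 / 2 ^ k : ℂ) *
    ∑ j ∈ range (k + 1), (-1) ^ j * (k.choose j : ℂ) * (z + j) ^ n

/-!
Put `c = 2 + 2i` and `c' = 2 - 2i`. By the addition formula,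
`∑ₘ C(N,m) cᵐ Bₘ(x) = cᴺ B_N(x + 1/c)`; since `1/c + 1/c' = 1/2` and `c⁴ = c'⁴ = -64`, using it
for `±c, ±c'` at `x = z/2` and `x = (z+1)/2` with `N = 4n` shows that
`∑ₘ C(4n,m) (cᵐ + c'ᵐ) ((-1)ᵐ Bₘ((z+1)/2) - Bₘ(z/2))` vanishes. For odd `m` the bracket is
`-2¹⁻ᵐ Bₘ(z)` by the multiplication theorem, for even `m = s + 1` it is `(s+1) 2⁻ᵐ Eₛ(z)`, and
`cᵐ + c'ᵐ = 2ᵐ ((1+i)ᵐ + (1-i)ᵐ)` is `(-64)ʲ` times `4, 0, -32, -128` for `m = 4j+1, …, 4j+4`.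
Grouping the vanishing sum in blocks of four gives the identity.

Each polynomial identity is proved by checking that the difference of the two sides is a
polynomial which is periodic (hence constant) or antiperiodic (hence zero).
-/

open Polynomial Function Complex fwdDiff

theorem Polynomial.eq_C_eval_zero_of_periodic {R : Type*} [CommRing R] [IsDomain R] [CharZero R]
    {p : R[X]} {c : R} (hc : c ≠ 0) (hp : Periodic p.eval c) : p = C (p.eval 0) := by
  refine eq_of_infinite_eval_eq _ _ <| Set.infinite_of_injective_forall_mem
    (f := fun n : ℕ ↦ (n : R) * c) (fun a b h ↦ ?_) fun n ↦ ?_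
  · exact_mod_cast mul_right_cancel₀ hc h
  · simp [hp.nat_mul_eq n]

theorem Polynomial.eq_zero_of_antiperiodic {R : Type*} [CommRing R] [IsDomain R] [CharZero R]
    {p : R[X]} {c : R} (hc : c ≠ 0) (hp : Antiperiodic p.eval c) : p = 0 := by
  have hconst := eq_C_eval_zero_of_periodic (mul_ne_zero two_ne_zero hc) hp.periodic_two_mul
  have h0 : p.eval 0 = 0 := by
    have h := hp 0
    simp only [zero_add] at h
    rw [hconst, eval_C, eval_C] at h
    exact self_eq_neg.mp h
  rw [hconst, h0, C_0]

theorem sum_choose_mul_mul_pow_mul_pow {R : Type*} [CommRing R] (n : ℕ) (x y : R) :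
    ∑ m ∈ range (n + 1), n.choose m * (m * x ^ (m - 1)) * y ^ (n - m) =
      n * (x + y) ^ (n - 1) := by
  have h := congr(eval x (derivative $(add_pow (X : R[X]) (C y) n)))
  simp only [derivative_X_add_C_pow, derivative_sum, eval_finsetSum, ← C_pow, ← C_eq_natCast,
    mul_comm _ (C _), derivative_C_mul, derivative_X_pow, eval_mul, eval_C, eval_pow, eval_X,
    eval_add] at h
  rw [h]
  exact sum_congr rfl fun m _ ↦ by ring

section Bernoulli

variable {A : Type*} [CommRing A] [Algebra ℚ A]

theorem aeval_bernoulli_add_one (n : ℕ) (x : A) :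
    aeval (x + 1) (bernoulli n) = aeval x (bernoulli n) + n * x ^ (n - 1) := by
  simpa [aeval_comp, add_comm] using congr(aeval x $(bernoulli_comp_one_add_X n))

theorem aeval_bernoulli_one_sub (n : ℕ) (x : A) :
    aeval (1 - x) (bernoulli n) = (-1) ^ n * aeval x (bernoulli n) := by
  simpa [aeval_comp] using congr(aeval x $(bernoulli_comp_one_sub_X n))

theorem aeval_zero_bernoulli (n : ℕ) :
    aeval (0 : A) (bernoulli n) = algebraMap ℚ A (_root_.bernoulli n) := by
  rw [← map_zero (algebraMap ℚ A), aeval_algebraMap_apply, coe_aeval_eq_eval, bernoulli_eval_zero]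

variable {K : Type*} [Field K] [CharZero K]

theorem aeval_bernoulli_add (n : ℕ) (x y : K) :
    aeval (x + y) (bernoulli n) =
      ∑ m ∈ range (n + 1), n.choose m * aeval x (bernoulli m) * y ^ (n - m) := by
  let B (m : ℕ) : K[X] := (Polynomial.bernoulli m).map (algebraMap ℚ K)
  let D : K[X] := (B n).comp (X + C y) - ∑ m ∈ range (n + 1), C (n.choose m * y ^ (n - m)) * B m
  have hD (w : K) : D.eval w = aeval (w + y) (bernoulli n) -
      ∑ m ∈ range (n + 1), n.choose m * aeval w (bernoulli m) * y ^ (n - m) := by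
    simp [D, B, eval_finsetSum, mul_right_comm]
  have hper : Periodic D.eval 1 := fun w ↦ by
    simp only [hD, add_right_comm w 1 y, aeval_bernoulli_add_one, mul_add, add_mul,
      sum_add_distrib, sum_choose_mul_mul_pow_mul_pow]
    ring
  have h0 : D.eval 0 = 0 := by
    rw [hD, zero_add, bernoulli_def, map_sum, sub_eq_zero, ← sum_range_reflect]
    refine sum_congr rfl fun m hm ↦ ?_
    have hm : m ≤ n := mem_range_succ_iff.1 hm
    simp [aeval_monomial, Nat.choose_symm hm, Nat.sub_sub_self hm, aeval_zero_bernoulli, mul_comm]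
  simpa [h0, hD, sub_eq_zero] using congr(eval x $(eq_C_eval_zero_of_periodic one_ne_zero hper))

theorem sum_choose_mul_pow_mul_aeval_bernoulli (N : ℕ) {c : K} (hc : c ≠ 0) (x : K) :
    ∑ m ∈ range (N + 1), N.choose m * c ^ m * aeval x (bernoulli m) =
      c ^ N * aeval (x + c⁻¹) (bernoulli N) := by
  rw [aeval_bernoulli_add, mul_sum]
  refine sum_congr rfl fun m hm ↦ ?_
  obtain ⟨k, rfl⟩ := Nat.exists_eq_add_of_le (mem_range_succ_iff.1 hm)
  rw [Nat.add_sub_cancel_left, inv_pow, pow_add]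
  field_simp

theorem sum_choose_mul_pow_mul_neg_one_pow_mul_sub (N : ℕ) {c : K} (hc : c ≠ 0) (x y : K) :
    ∑ m ∈ range (N + 1), N.choose m * c ^ m *
        ((-1) ^ m * aeval y (bernoulli m) - aeval x (bernoulli m)) =
      (-c) ^ N * aeval (y - c⁻¹) (bernoulli N) - c ^ N * aeval (x + c⁻¹) (bernoulli N) := by
  rw [sub_eq_add_neg y, ← inv_neg, ← sum_choose_mul_pow_mul_aeval_bernoulli N (neg_ne_zero.2 hc),
    ← sum_choose_mul_pow_mul_aeval_bernoulli N hc, ← sum_sub_distrib]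
  refine sum_congr rfl fun m _ ↦ ?_
  rw [neg_pow]
  ring

theorem two_pow_mul_aeval_bernoulli_half_add {m : ℕ} (hm : Odd m) (x : K) :
    2 ^ m * (aeval (x / 2) (bernoulli m) + aeval ((x + 1) / 2) (bernoulli m)) =
      2 * aeval x (bernoulli m) := by
  let B : K[X] := (Polynomial.bernoulli m).map (algebraMap ℚ K)
  let Q : K[X] := C 2 * B - C (2 ^ m) * (B.comp (C 2⁻¹ * X) + B.comp (C 2⁻¹ * (X + 1)))
  have hQ (w : K) : Q.eval w = 2 * aeval w (bernoulli m) -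
      2 ^ m * (aeval (w / 2) (bernoulli m) + aeval ((w + 1) / 2) (bernoulli m)) := by
    simp [Q, B, div_eq_inv_mul]
  obtain ⟨t, rfl⟩ := hm
  have hper : Periodic Q.eval 1 := fun w ↦ by
    have hw : (w + 1 + 1) / 2 = w / 2 + 1 := by ring
    simp only [hQ, hw, aeval_bernoulli_add_one, Nat.add_sub_cancel, div_pow]
    field_simp
    ring
  have hrefl (w : K) : Q.eval (1 - w) = -Q.eval w := by
    have h1 : (1 - w) / 2 = 1 - (w + 1) / 2 := by ring
    have h2 : (1 - w + 1) / 2 = 1 - w / 2 := by ring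
    simp only [hQ, h1, h2, aeval_bernoulli_one_sub, (odd_two_mul_add_one t).neg_one_pow]
    ring
  have h0 : Q.eval 0 = 0 := by
    have h : Q.eval 1 = Q.eval 0 := hper.eq
    rw [← sub_zero 1, hrefl] at h
    exact neg_eq_self.mp h
  have := congr(eval x $(eq_C_eval_zero_of_periodic one_ne_zero hper))
  rw [eval_C, h0, hQ, sub_eq_zero] at this
  exact this.symm

end Bernoulli

theorem sum_neg_one_pow_mul_choose_mul_eq_fwdDiff_iter {R : Type*} [CommRing R] (f : R → R)
    (k : ℕ) (z : R) :
    ∑ j ∈ range (k + 1), (-1) ^ j * k.choose j * f (z + j) = (-1) ^ k * Δ_[1] ^[k] f z := by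
  rw [fwdDiff_iter_eq_sum_shift, mul_sum]
  refine sum_congr rfl fun j hj ↦ ?_
  obtain ⟨i, rfl⟩ := Nat.exists_eq_add_of_le (mem_range_succ_iff.1 hj)
  rw [zsmul_eq_mul, nsmul_one, Nat.add_sub_cancel_left]
  push_cast
  ring_nf
  rw [pow_mul', neg_one_sq, one_pow, mul_one]

theorem eulerPoly_eq_sum_fwdDiff_iter (d : ℕ) (z : ℂ) :
    eulerPoly d z = ∑ k ∈ range (d + 1), (-2⁻¹) ^ k * Δ_[1] ^[k] (· ^ d) z := by
  refine sum_congr rfl fun k _ ↦ ?_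
  rw [sum_neg_one_pow_mul_choose_mul_eq_fwdDiff_iter (· ^ d), neg_pow (2⁻¹ : ℂ), inv_pow]
  ring

theorem eulerPoly_add_eulerPoly_add_one (d : ℕ) (z : ℂ) :
    eulerPoly d z + eulerPoly d (z + 1) = 2 * z ^ d := by
  set a : ℕ → ℂ := fun k ↦ (-2⁻¹) ^ k * Δ_[1] ^[k] (· ^ d) z
  have hshift (k : ℕ) :
      Δ_[1] ^[k] (· ^ d) (z + 1) = Δ_[1] ^[k] (· ^ d) z + Δ_[1] ^[k + 1] (· ^ d) z := by
    rw [iterate_succ_apply', fwdDiff]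
    ring
  rw [eulerPoly_eq_sum_fwdDiff_iter, eulerPoly_eq_sum_fwdDiff_iter, ← sum_add_distrib,
    sum_congr rfl fun k _ ↦ (by rw [hshift]; ring : _ = 2 * (a k - a (k + 1))), ← mul_sum,
    sum_range_sub']
  simp [a, fwdDiff_iter_pow_eq_zero_of_lt (lt_add_one d)]

noncomputable def eulerPolynomial (n : ℕ) : ℂ[X] :=
  ∑ k ∈ range (n + 1), C (1 / 2 ^ k) *
    ∑ j ∈ range (k + 1), C ((-1 : ℂ) ^ j * k.choose j) * (X + C (j : ℂ)) ^ n

theorem eval_eulerPolynomial (n : ℕ) (z : ℂ) : (eulerPolynomial n).eval z = eulerPoly n z := by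
  simp [eulerPolynomial, eulerPoly, eval_finsetSum, mul_assoc]

theorem succ_mul_eulerPoly (s : ℕ) (z : ℂ) :
    (s + 1) * eulerPoly s z =
      2 ^ (s + 1) * (bernoulliPoly (s + 1) ((z + 1) / 2) - bernoulliPoly (s + 1) (z / 2)) := by
  let B : ℂ[X] := (Polynomial.bernoulli (s + 1)).map (algebraMap ℚ ℂ)
  let P : ℂ[X] := C (s + 1 : ℂ) * eulerPolynomial s -
    C (2 ^ (s + 1)) * (B.comp (C 2⁻¹ * (X + 1)) - B.comp (C 2⁻¹ * X))
  have hP (w : ℂ) : P.eval w = (s + 1) * eulerPoly s w -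
      2 ^ (s + 1) * (bernoulliPoly (s + 1) ((w + 1) / 2) - bernoulliPoly (s + 1) (w / 2)) := by
    simp [P, B, eval_eulerPolynomial, bernoulliPoly, div_eq_inv_mul]
  have hanti : Antiperiodic P.eval 1 := fun w ↦ by
    have hw : (w + 1 + 1) / 2 = w / 2 + 1 := by ring
    have hE := eulerPoly_add_eulerPoly_add_one s w
    simp only [hP, hw, bernoulliPoly, aeval_bernoulli_add_one, Nat.add_sub_cancel, div_pow]
    field_simp
    push_cast
    linear_combination (s + 1 : ℂ) * 2 ^ s * hE
  simpa [hP, sub_eq_zero] using congr(eval z $(eq_zero_of_antiperiodic one_ne_zero hanti))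

noncomputable def bernoulliHalfDiff (m : ℕ) (z : ℂ) : ℂ :=
  2 ^ m * ((-1) ^ m * bernoulliPoly m ((z + 1) / 2) - bernoulliPoly m (z / 2))

theorem bernoulliHalfDiff_zero (z : ℂ) : bernoulliHalfDiff 0 z = 0 := by
  simp [bernoulliHalfDiff, bernoulliPoly]

theorem bernoulliHalfDiff_of_odd {m : ℕ} (hm : Odd m) (z : ℂ) :
    bernoulliHalfDiff m z = -2 * bernoulliPoly m z := by
  unfold bernoulliHalfDiff bernoulliPoly
  rw [hm.neg_one_pow]
  linear_combination -two_pow_mul_aeval_bernoulli_half_add hm z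

theorem bernoulliHalfDiff_succ_of_odd {s : ℕ} (hs : Odd s) (z : ℂ) :
    bernoulliHalfDiff (s + 1) z = (s + 1) * eulerPoly s z := by
  rw [bernoulliHalfDiff, hs.add_one.neg_one_pow, one_mul, succ_mul_eulerPoly]

theorem sum_choose_mul_bernoulliHalfDiff (n : ℕ) (z : ℂ) :
    ∑ m ∈ range (4 * n + 1), (4 * n).choose m * ((1 + I) ^ m + (1 - I) ^ m) * bernoulliHalfDiff m z
      = 0 := by
  set c : ℂ := 2 * (1 + I)
  set c' : ℂ := 2 * (1 - I)
  have hc : c ≠ 0 := by simp [c, Complex.ext_iff]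
  have hc' : c' ≠ 0 := by simp [c', Complex.ext_iff]
  have hinv : c⁻¹ + c'⁻¹ = 2⁻¹ := by
    field_simp
    simp only [c, c']
    linear_combination 4 * I_sq
  have hpow : c ^ 4 = c' ^ 4 := by
    simp only [c, c']
    linear_combination 128 * I * I_sq
  have he : Even (4 * n) := ⟨2 * n, by ring⟩
  have hshift : (z + 1) / 2 - c⁻¹ = z / 2 + c'⁻¹ := by linear_combination -hinv
  have hshift' : (z + 1) / 2 - c'⁻¹ = z / 2 + c⁻¹ := by linear_combination -hinv
  calc _ = ∑ m ∈ range (4 * n + 1),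
        ((4 * n).choose m * c ^ m *
            ((-1) ^ m * aeval ((z + 1) / 2) (bernoulli m) - aeval (z / 2) (bernoulli m)) +
          (4 * n).choose m * c' ^ m *
            ((-1) ^ m * aeval ((z + 1) / 2) (bernoulli m) - aeval (z / 2) (bernoulli m))) :=
        sum_congr rfl fun m _ ↦ by simp only [bernoulliHalfDiff, bernoulliPoly, c, c', mul_pow]; ring
    _ = 0 := by
      rw [sum_add_distrib, sum_choose_mul_pow_mul_neg_one_pow_mul_sub _ hc,
        sum_choose_mul_pow_mul_neg_one_pow_mul_sub _ hc', hshift, hshift', he.neg_pow, he.neg_pow,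
        pow_mul c, pow_mul c', hpow]
      ring

theorem one_add_I_pow_add_one_sub_I_pow (j r : ℕ) :
    (1 + I) ^ (4 * j + r) + (1 - I) ^ (4 * j + r) =
      (-1) ^ j * 2 ^ (2 * j) * ((1 + I) ^ r + (1 - I) ^ r) := by
  have h4 : (1 + I) ^ 4 = -1 * 2 ^ 2 := by linear_combination (I ^ 2 + 4 * I + 5) * I_sq
  have h4' : (1 - I) ^ 4 = -1 * 2 ^ 2 := by linear_combination (I ^ 2 - 4 * I + 5) * I_sq
  rw [pow_add, pow_add, pow_mul, pow_mul, h4, h4', mul_pow, ← pow_mul]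
  ring

theorem Finset.sum_range_four_mul_add_one {M : Type*} [AddCommMonoid M] (f : ℕ → M) (n : ℕ) :
    ∑ m ∈ range (4 * n + 1), f m = f 0 + ∑ k ∈ Icc 1 n, ∑ r ∈ range 4, f (4 * k - 3 + r) := by
  induction n with
  | zero => simp
  | succ n ih =>
    rw [sum_Icc_succ_top (by omega), ← add_assoc, ← ih,
      show 4 * (n + 1) + 1 = 4 * n + 1 + 4 by ring, sum_range_add,
      show 4 * (n + 1) - 3 = 4 * n + 1 by omega]

theorem sum_range_four_choose_mul_bernoulliHalfDiff (n k : ℕ) (hk : 1 ≤ k) (z : ℂ) :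
    ∑ r ∈ range 4, (4 * n).choose (4 * k - 3 + r) *
        ((1 + I) ^ (4 * k - 3 + r) + (1 - I) ^ (4 * k - 3 + r)) * bernoulliHalfDiff (4 * k - 3 + r) z =
      4 * ((-1 : ℂ) ^ k * 2 ^ (2 * k + 1) * (k : ℂ) *
          ((4 * n).choose (4 * k) : ℂ) * eulerPoly (4 * k - 1) z
        - (-1 : ℂ) ^ k * 2 ^ (2 * k - 1) *
          ((4 * n).choose (4 * k - 1) : ℂ) * bernoulliPoly (4 * k - 1) z
        + (-1 : ℂ) ^ k * 2 ^ (2 * k - 2) *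
          ((4 * n).choose (4 * k - 3) : ℂ) * bernoulliPoly (4 * k - 3) z) := by
  obtain ⟨j, rfl⟩ := Nat.exists_eq_add_of_le' hk
  rw [show 4 * (j + 1) = 4 * j + 4 by ring, show 4 * j + 4 - 3 = 4 * j + 1 by omega,
    show 4 * j + 4 - 1 = 4 * j + 3 by omega, show 2 * (j + 1) - 1 = 2 * j + 1 by omega,
    show 2 * (j + 1) - 2 = 2 * j by omega]
  simp only [sum_range_succ, sum_range_zero, zero_add, add_assoc, Nat.reduceAdd]
  have v2 : (1 + I) ^ 2 + (1 - I) ^ 2 = 0 := by linear_combination 2 * I_sq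
  have v3 : (1 + I) ^ 3 + (1 - I) ^ 3 = -4 := by linear_combination 6 * I_sq
  have v4 : (1 + I) ^ 4 + (1 - I) ^ 4 = -8 := by linear_combination 2 * (I ^ 2 + 5) * I_sq
  have e4 := bernoulliHalfDiff_succ_of_odd (s := 4 * j + 3) ⟨2 * j + 1, by ring⟩ z
  rw [one_add_I_pow_add_one_sub_I_pow, one_add_I_pow_add_one_sub_I_pow,
    one_add_I_pow_add_one_sub_I_pow, one_add_I_pow_add_one_sub_I_pow, v2, v3, v4, e4,
    bernoulliHalfDiff_of_odd (m := 4 * j + 1) ⟨2 * j, by ring⟩,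
    bernoulliHalfDiff_of_odd (m := 4 * j + 3) ⟨2 * j + 1, by ring⟩]
  push_cast
  ring

theorem stmt12_general (n : ℕ) (z : ℂ) :
    ∑ k ∈ Icc 1 n, (-1 : ℂ) ^ k * 2 ^ (2 * k + 1) * (k : ℂ) *
        ((4 * n).choose (4 * k) : ℂ) * eulerPoly (4 * k - 1) z
      = ∑ k ∈ Icc 1 n, (-1 : ℂ) ^ k * 2 ^ (2 * k - 1) *
          ((4 * n).choose (4 * k - 1) : ℂ) * bernoulliPoly (4 * k - 1) z
        - ∑ k ∈ Icc 1 n, (-1 : ℂ) ^ k * 2 ^ (2 * k - 2) *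
          ((4 * n).choose (4 * k - 3) : ℂ) * bernoulliPoly (4 * k - 3) z := by
  have h := sum_choose_mul_bernoulliHalfDiff n z
  rw [sum_range_four_mul_add_one, bernoulliHalfDiff_zero, mul_zero, zero_add,
    sum_congr rfl fun k hk ↦ sum_range_four_choose_mul_bernoulliHalfDiff n k (mem_Icc.1 hk).1 z,
    ← mul_sum, sum_add_distrib, sum_sub_distrib] at h
  linear_combination h / 4

theorem stmt12 (n : ℕ) (hn : 0 < n) (z : ℂ) :
    ∑ k ∈ Icc 1 n, (-1 : ℂ) ^ k * 2 ^ (2 * k + 1) * (k : ℂ) *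
        ((4 * n).choose (4 * k) : ℂ) * eulerPoly (4 * k - 1) z
      = ∑ k ∈ Icc 1 n, (-1 : ℂ) ^ k * 2 ^ (2 * k - 1) *
          ((4 * n).choose (4 * k - 1) : ℂ) * bernoulliPoly (4 * k - 1) z
        - ∑ k ∈ Icc 1 n, (-1 : ℂ) ^ k * 2 ^ (2 * k - 2) *
          ((4 * n).choose (4 * k - 3) : ℂ) * bernoulliPoly (4 * k - 3) z :=
  stmt12_general n z
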